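/- Let b ≥ 2 be an integer and λ ∈ (1/b, 1] a real number. Set k = ⌊λb⌋, suppose k ≥ 2, and define q_i = (1 − λ/k)^{k−i} · (λ/k) / (1 − (1 − λ/k)^k) for 1 ≤ i ≤ k. Then for every integer x with 1 ≤ x < k, ∑_{i=1}^{x} (b + i − 1)·q_i + x·∑_{i=x+1}^{k} q_i ≤ (λ·b)/(1 − e^{−λ}). -/

import Mathlib

open Finset Real

/-!
Write `c = λ/k` and `r = 1 - c`, so that `q_i = c·r^(k-i) / (1 - r^k)`. The unnormalised
cost `N = ∑_{i ≤ x} (b+i-1)·c·r^(k-i) + x·(1 - r^(k-x))` has the closed form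
`c·N = (bc - 1)(r^(k-x) - r^k) + xc`. Since `k ≤ λb` we have `bc ≥ 1`, and Bernoulli's inequality
gives `1 - r^k ≤ kc = λ`; with `x ≤ k` this yields `c·N ≤ (bc - 1)·λ + λ = c·λb`, i.e. `N ≤ λb`.
Finally the normaliser `1 - r^k` is at least `1 - e^{-λ}` because `(1 - λ/k)^k ≤ e^{-λ}`.
-/

lemma sum_Icc_one_sub_zpow_mul_eq {c : ℝ} (hc : c ≠ 1) {x k : ℤ} (hxk : x ≤ k) :
    ∑ i ∈ Icc (x + 1) k, (1 - c) ^ (k - i) * c = 1 - (1 - c) ^ (k - x) := by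
  have hr : 1 - c ≠ 0 := sub_ne_zero.mpr (Ne.symm hc)
  induction x, hxk using Int.leInductionDown with
  | base => simp
  | pred x hxk ih =>
    rw [sub_add_cancel, ← insert_Icc_add_one_left_eq_Icc hxk, sum_insert (by simp), ih,
      show k - (x - 1) = k - x + 1 by ring, zpow_add_one₀ hr]
    ring

lemma mul_sum_Icc_linear_mul_one_sub_zpow_mul_eq {c : ℝ} (hc : c ≠ 1) (B : ℝ) (k : ℤ) {x : ℤ}
    (hx : 0 ≤ x) :
    c * ∑ i ∈ Icc 1 x, (B + i - 1) * ((1 - c) ^ (k - i) * c)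
      = (B * c - 1) * ((1 - c) ^ (k - x) - (1 - c) ^ k) + x * c * (1 - c) ^ (k - x) := by
  have hr : 1 - c ≠ 0 := sub_ne_zero.mpr (Ne.symm hc)
  induction x, hx using Int.leInduction with
  | base => simp
  | succ x hx ih =>
    rw [← insert_Icc_right_eq_Icc_add_one (by omega), sum_insert (by simp), mul_add, ih,
      show k - x = k - (x + 1) + 1 by ring, zpow_add_one₀ hr]
    push_cast
    ring

lemma one_sub_div_zpow_le_exp_neg {k : ℤ} (hk : 0 ≤ k) {t : ℝ} (ht : t ≤ k) :
    (1 - t / k) ^ k ≤ exp (-t) := by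
  lift k to ℕ using hk
  simpa using one_sub_div_pow_le_exp_neg (by simpa using ht)

lemma one_sub_one_sub_zpow_le {c : ℝ} (hc : c ≤ 2) {k : ℤ} (hk : 0 ≤ k) :
    1 - (1 - c) ^ k ≤ k * c := by
  lift k to ℕ using hk
  have bernoulli := one_add_mul_le_pow (a := -c) (by linarith) k
  rw [← sub_eq_add_neg] at bernoulli
  simp only [zpow_natCast, Int.cast_natCast]
  linarith

lemma expected_cost_numerator_le {b c : ℝ} (hc₀ : 0 < c) (hc₁ : c < 1) (hbc : 1 ≤ b * c)
    {x k : ℤ} (hx : 0 ≤ x) (hxk : x ≤ k) :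
    ∑ i ∈ Icc 1 x, (b + i - 1) * ((1 - c) ^ (k - i) * c)
        + x * ∑ i ∈ Icc (x + 1) k, (1 - c) ^ (k - i) * c
      ≤ c * k * b := by
  have hexpand : c * (∑ i ∈ Icc 1 x, (b + i - 1) * ((1 - c) ^ (k - i) * c)
        + x * ∑ i ∈ Icc (x + 1) k, (1 - c) ^ (k - i) * c)
      = (b * c - 1) * ((1 - c) ^ (k - x) - (1 - c) ^ k) + x * c := by
    rw [mul_add, mul_sum_Icc_linear_mul_one_sub_zpow_mul_eq hc₁.ne b k hx,
      sum_Icc_one_sub_zpow_mul_eq hc₁.ne hxk]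
    ring
  have hgap : (1 - c) ^ (k - x) - (1 - c) ^ k ≤ k * c := by
    have := zpow_le_one₀ (sub_pos.mpr hc₁) (sub_le_self 1 hc₀.le) (sub_nonneg.mpr hxk)
    linarith [one_sub_one_sub_zpow_le (by linarith : c ≤ 2) (hx.trans hxk)]
  have hxc : (x : ℝ) * c ≤ k * c := by gcongr
  refine le_of_mul_le_mul_left ?_ hc₀
  rw [hexpand]
  nlinarith [mul_le_mul_of_nonneg_left hgap (sub_nonneg.mpr hbc)]

lemma expected_cost_eq_div {b Z : ℝ} {k x : ℤ} (p q : ℤ → ℝ)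
    (hq : ∀ i ∈ Icc 1 k, q i = p i / Z) (hx : 0 ≤ x) (hxk : x ≤ k) :
    ∑ i ∈ Icc 1 x, (b + i - 1) * q i + x * ∑ i ∈ Icc (x + 1) k, q i
      = (∑ i ∈ Icc 1 x, (b + i - 1) * p i + x * ∑ i ∈ Icc (x + 1) k, p i) / Z := by
  have hhead : ∑ i ∈ Icc 1 x, (b + i - 1) * q i = ∑ i ∈ Icc 1 x, (b + i - 1) * p i / Z :=
    sum_congr rfl fun i hi ↦ by rw [hq i (Icc_subset_Icc_right hxk hi), mul_div_assoc']
  have htail : ∑ i ∈ Icc (x + 1) k, q i = ∑ i ∈ Icc (x + 1) k, p i / Z :=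
    sum_congr rfl fun i hi ↦ hq i (Icc_subset_Icc_left (by omega) hi)
  rw [hhead, htail, ← sum_div, ← sum_div, mul_div_assoc', add_div]

theorem costRobust_consistency_case2_general (b : ℕ) (lam : ℝ)
    (hlam₁ : 1 / (b : ℝ) < lam) (hlam₂ : lam ≤ 1)
    (k : ℤ) (hk : k = ⌊lam * (b : ℝ)⌋) (hk2 : 2 ≤ k)
    (q : ℤ → ℝ)
    (hq : ∀ i ∈ Finset.Icc 1 k,
      q i = (1 - lam / (k : ℝ)) ^ (k - i) * (lam / (k : ℝ)) / (1 - (1 - lam / (k : ℝ)) ^ k))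
    (x : ℤ) (hx1 : 1 ≤ x) (hxk : x < k) :
    ∑ i ∈ Finset.Icc 1 x, ((b : ℝ) + (i : ℝ) - 1) * q i
        + (x : ℝ) * ∑ i ∈ Finset.Icc (x + 1) k, q i
      ≤ lam * (b : ℝ) / (1 - Real.exp (-lam)) := by
  set c := lam / (k : ℝ) with hc
  have hk_pos : (0 : ℝ) < k := by exact_mod_cast (by omega : 0 < k)
  have hk_le : (k : ℝ) ≤ lam * b := hk ▸ Int.floor_le _
  have hlam₀ : 0 < lam := lt_of_le_of_lt (by positivity) hlam₁
  have hck : c * k = lam := div_mul_cancel₀ lam hk_pos.ne'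
  have hc₀ : 0 < c := div_pos hlam₀ hk_pos
  have hk_two : (2 : ℝ) ≤ k := by exact_mod_cast hk2
  have hc₁ : c < 1 := (div_lt_one hk_pos).mpr (by linarith)
  have hbc : 1 ≤ b * c := by
    rw [hc, mul_div_assoc', le_div_iff₀ hk_pos]; linarith
  have hZ : 1 - exp (-lam) ≤ 1 - (1 - c) ^ k := by
    linarith [one_sub_div_zpow_le_exp_neg (by omega : 0 ≤ k) (by linarith : lam ≤ k)]
  have hZ_pos : 0 < 1 - exp (-lam) := by simpa using hlam₀
  rw [expected_cost_eq_div (fun i ↦ (1 - c) ^ (k - i) * c) q hq (by omega) hxk.le]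
  refine div_le_div₀ (by positivity) ?_ hZ_pos hZ
  simpa [hck] using expected_cost_numerator_le hc₀ hc₁ hbc (by omega : 0 ≤ x) hxk.le

/-- Case `y ≥ b`, `x < k` of Theorem 2 (consistency side): the expected cost of
the CostRobust randomized algorithm is at most `λ·b/(1 − e^{−λ})`. -/
theorem costRobust_consistency_case2 (b : ℕ) (hb : 2 ≤ b) (lam : ℝ)
    (hlam₁ : 1 / (b : ℝ) < lam) (hlam₂ : lam ≤ 1)
    (k : ℤ) (hk : k = ⌊lam * (b : ℝ)⌋) (hk2 : 2 ≤ k)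
    (q : ℤ → ℝ)
    (hq : ∀ i ∈ Finset.Icc 1 k,
      q i = (1 - lam / (k : ℝ)) ^ (k - i) * (lam / (k : ℝ)) / (1 - (1 - lam / (k : ℝ)) ^ k))
    (x : ℤ) (hx1 : 1 ≤ x) (hxk : x < k) :
    ∑ i ∈ Finset.Icc 1 x, ((b : ℝ) + (i : ℝ) - 1) * q i
        + (x : ℝ) * ∑ i ∈ Finset.Icc (x + 1) k, q i
      ≤ lam * (b : ℝ) / (1 - Real.exp (-lam)) :=
  costRobust_consistency_case2_general b lam hlam₁ hlam₂ k hk hk2 q hq x hx1 hxk
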